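/- arXiv:1911.12972 — 2 statements merged into one kernel-verified Lean document; each statement's English description precedes it below -/
import Mathlib

section
/- For every positive integer n, every real α with 0 < α ≤ 1/n and every real x ≥ 0: U_n^[α](1; x) = 1, U_n^[α](t; x) = (1 + nx)/n, and U_n^[α](t²; x) = (2 + 4nx + n²x² + n²xα)/n². -/
open MeasureTheory Filter

noncomputable section

/-- The Szász basis function `e^(-nu) (nu)^i / i!`. -/
def szaszBasis (n i : ℕ) (u : ℝ) : ℝ :=
  Real.exp (-(n : ℝ) * u) * ((n : ℝ) * u) ^ i / (Nat.factorial i : ℝ)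

/-- The rising factorial `x^(i,-α) = ∏_{j=0}^{i-1} (x + jα)` with increment `α`. -/
def risingFac (x α : ℝ) (i : ℕ) : ℝ :=
  ∏ j ∈ Finset.range i, (x + (j : ℝ) * α)

/-- The Durrmeyer modification of the generalized Szász-Mirakjan operators:
`U_n^[α](f; x) = n Σ_i (1+nα)^(−x/α) (α+1/n)^(−i) x^(i,−α)/i! ∫_0^∞ e^(−nu)(nu)^i/i! f(u) du`. -/
def U (n : ℕ) (α : ℝ) (f : ℝ → ℝ) (x : ℝ) : ℝ :=
  (n : ℝ) * ∑' i : ℕ,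
    (1 + (n : ℝ) * α) ^ (-x / α) * (α + 1 / (n : ℝ)) ^ (-(i : ℤ)) *
      (risingFac x α i / (Nat.factorial i : ℝ)) *
      ∫ u in Set.Ioi (0 : ℝ), szaszBasis n i u * f u

/-- The `m`-th central moment `Θ_{n,m}^[α](x) = U_n^[α]((t−x)^m; x)`. -/
def theta (n : ℕ) (α : ℝ) (m : ℕ) (x : ℝ) : ℝ :=
  U n α (fun t => (t - x) ^ m) x

end

/-!
Put `a = x / α`, `c = 1 + nα` and `s = nα / c`, so that `1 - s = c⁻¹`. Since
`x^(i,-α) = α^i (a)_i` with `(a)_i` the rising factorial, the weights of `U` are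
`c^(-a) (a)_i s^i / i!`, and the binomial series `∑ (a)_i s^i / i! = (1 - s)^(-a)`
(shifted by `k`) gives their factorial moments `∑ i(i-1)⋯(i-k+1) · weight_i = n^k x^(k,-α)`.
The Gamma integral `∫₀^∞ e^(-nu) (nu)^i / i! · u^m du = (i+m)! / (i! n^(m+1))` turns
`U(t^m)` into a combination of these moments, because `(i+m)!/i!` is a polynomial in `i`.
-/

open Polynomial Nat Set

theorem hasSum_ascPochhammer_eval_mul_pow_div_factorial (a : ℝ) {s : ℝ} (hs : |s| < 1) :
    HasSum (fun i => (ascPochhammer ℝ i).eval a * s ^ i / i !) ((1 - s) ^ (-a)) := by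
  have hsum := (Real.one_div_one_sub_rpow_hasFPowerSeriesOnBall_zero a).hasSum
    (y := s) (by simpa [enorm_eq_nnnorm, ← NNReal.coe_lt_coe] using hs)
  have h1s : 0 ≤ 1 - s := by linarith [le_abs_self s]
  rw [zero_add, one_div, ← Real.rpow_neg h1s] at hsum
  refine hsum.congr_fun fun i => ?_
  rw [FormalMultilinearSeries.ofScalars_apply_eq, smul_eq_mul, ← Ring.multichoose_eq,
    ← ascPochhammer_smeval_eq_eval, ← Ring.factorial_nsmul_multichoose_eq_ascPochhammer,
    nsmul_eq_mul]
  field_simp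

theorem ascPochhammer_eval_add {R : Type*} [CommSemiring R] (a : R) (k i : ℕ) :
    (ascPochhammer R (k + i)).eval a =
      (ascPochhammer R k).eval a * (ascPochhammer R i).eval (a + k) := by
  rw [← ascPochhammer_mul, eval_mul, eval_comp]
  simp

theorem hasSum_descFactorial_mul_ascPochhammer_eval_mul_pow_div_factorial (a : ℝ) (k : ℕ)
    {s : ℝ} (hs : |s| < 1) :
    HasSum (fun i => (i.descFactorial k : ℝ) * ((ascPochhammer ℝ i).eval a * s ^ i / i !))
      ((ascPochhammer ℝ k).eval a * s ^ k * (1 - s) ^ (-(a + k))) := by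
  rw [← hasSum_nat_add_iff' k]
  have hvanish : ∀ i ∈ Finset.range k,
      (i.descFactorial k : ℝ) * ((ascPochhammer ℝ i).eval a * s ^ i / i !) = 0 := fun i hi => by
    rw [Nat.descFactorial_eq_zero_iff_lt.mpr (Finset.mem_range.mp hi), Nat.cast_zero, zero_mul]
  rw [Finset.sum_eq_zero hvanish, sub_zero]
  refine ((hasSum_ascPochhammer_eval_mul_pow_div_factorial (a + k) hs).mul_left
    ((ascPochhammer ℝ k).eval a * s ^ k)).congr_fun fun i => ?_
  have hfac : (i ! : ℝ) * (k + i).descFactorial k = (k + i) ! := by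
    exact_mod_cast Nat.add_sub_cancel_left k i ▸
      Nat.factorial_mul_descFactorial (Nat.le_add_right k i)
  rw [add_comm i k, ascPochhammer_eval_add, pow_add, ← hfac]
  field_simp

theorem integral_pow_mul_exp_neg_mul_Ioi (k : ℕ) {r : ℝ} (hr : 0 < r) :
    ∫ u in Ioi (0 : ℝ), u ^ k * Real.exp (-(r * u)) = k ! / r ^ (k + 1) := by
  have h := Real.integral_rpow_mul_exp_neg_mul_Ioi (a := k + 1) (by positivity) hr
  rw [add_sub_cancel_right, Real.Gamma_nat_eq_factorial, ← Nat.cast_add_one, Real.rpow_natCast,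
    one_div_pow, one_div, ← div_eq_inv_mul] at h
  rw [← h]
  exact setIntegral_congr_fun measurableSet_Ioi fun u _ => by rw [Real.rpow_natCast]

theorem integral_szaszBasis_mul_pow {n : ℕ} (hn : 0 < n) (i m : ℕ) :
    ∫ u in Ioi (0 : ℝ), szaszBasis n i u * u ^ m = (i + m) ! / (i ! * (n : ℝ) ^ (m + 1)) := by
  have hn' : (0 : ℝ) < n := Nat.cast_pos.mpr hn
  have hintegrand : ∀ u : ℝ, szaszBasis n i u * u ^ m
      = ((n : ℝ) ^ i / i !) * (u ^ (i + m) * Real.exp (-(n * u))) := fun u => by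
    rw [szaszBasis, neg_mul, mul_pow, pow_add]
    ring
  simp_rw [hintegrand]
  rw [integral_const_mul, integral_pow_mul_exp_neg_mul_Ioi (i + m) hn', add_assoc, pow_add]
  field_simp

theorem risingFac_zero (x α : ℝ) : risingFac x α 0 = 1 :=
  Finset.prod_range_zero _

theorem risingFac_succ (x α : ℝ) (i : ℕ) :
    risingFac x α (i + 1) = risingFac x α i * (x + i * α) :=
  Finset.prod_range_succ _ _

theorem risingFac_one (x α : ℝ) : risingFac x α 1 = x := by
  simp [risingFac_succ, risingFac_zero]

theorem risingFac_two (x α : ℝ) : risingFac x α 2 = x * (x + α) := by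
  rw [risingFac_succ, risingFac_one, Nat.cast_one, one_mul]

theorem risingFac_eq_pow_mul_ascPochhammer_eval (x : ℝ) {α : ℝ} (hα : α ≠ 0) (i : ℕ) :
    risingFac x α i = α ^ i * (ascPochhammer ℝ i).eval (x / α) := by
  induction i with
  | zero => simp [risingFac_zero]
  | succ i ih =>
    rw [risingFac_succ, ih, ascPochhammer_succ_eval, pow_succ]
    field_simp

noncomputable def genSzaszBasis (n : ℕ) (α x : ℝ) (i : ℕ) : ℝ :=
  (1 + (n : ℝ) * α) ^ (-x / α) * (α + 1 / (n : ℝ)) ^ (-(i : ℤ)) *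
    (risingFac x α i / (Nat.factorial i : ℝ))

theorem U_eq_tsum_genSzaszBasis (n : ℕ) (α : ℝ) (f : ℝ → ℝ) (x : ℝ) :
    U n α f x =
      n * ∑' i, genSzaszBasis n α x i * ∫ u in Ioi (0 : ℝ), szaszBasis n i u * f u :=
  rfl

theorem genSzaszBasis_eq {n : ℕ} (hn : 0 < n) {α : ℝ} (hα : α ≠ 0) (x : ℝ) (i : ℕ) :
    genSzaszBasis n α x i = (1 + n * α) ^ (-(x / α)) *
      ((ascPochhammer ℝ i).eval (x / α) * (n * α / (1 + n * α)) ^ i / i !) := by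
  have hn' : (n : ℝ) ≠ 0 := Nat.cast_ne_zero.mpr hn.ne'
  have hbase : α + 1 / (n : ℝ) = (1 + n * α) / n := by field_simp; ring
  rw [genSzaszBasis, risingFac_eq_pow_mul_ascPochhammer_eval x hα, hbase, zpow_neg, zpow_natCast,
    ← inv_pow, inv_div, neg_div, div_pow, div_pow, mul_pow]
  field_simp

theorem hasSum_descFactorial_mul_genSzaszBasis {n : ℕ} (hn : 0 < n) {α : ℝ} (hα : 0 < α)
    (x : ℝ) (k : ℕ) :
    HasSum (fun i => (i.descFactorial k : ℝ) * genSzaszBasis n α x i)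
      ((n : ℝ) ^ k * risingFac x α k) := by
  set c : ℝ := 1 + n * α
  have hc0 : 0 < c := by positivity
  set s : ℝ := n * α / c with hs
  have hs_abs : |s| < 1 := by
    rw [abs_of_nonneg (by positivity), hs, div_lt_one hc0]; linarith
  have h1s : 1 - s = c⁻¹ := by rw [hs]; field_simp; ring
  have hsum := (hasSum_descFactorial_mul_ascPochhammer_eval_mul_pow_div_factorial (x / α) k
    hs_abs).mul_left (c ^ (-(x / α)))
  rw [h1s, Real.inv_rpow hc0.le, ← Real.rpow_neg hc0.le, neg_neg] at hsum
  have hvalue : c ^ (-(x / α)) * ((ascPochhammer ℝ k).eval (x / α) * s ^ k * c ^ (x / α + k))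
      = (n : ℝ) ^ k * risingFac x α k := by
    rw [Real.rpow_add hc0, Real.rpow_neg hc0.le, Real.rpow_natCast,
      risingFac_eq_pow_mul_ascPochhammer_eval x hα.ne', hs, div_pow, mul_pow]
    field_simp
  rw [← hvalue]
  exact hsum.congr_fun fun i => by rw [genSzaszBasis_eq hn hα.ne']; ring

theorem U_pow_eq_of_hasSum {n : ℕ} (hn : 0 < n) (α x : ℝ) (m : ℕ) {S : ℝ}
    (hS : HasSum (fun i => ((i + m) ! / i ! : ℝ) * genSzaszBasis n α x i) S) :
    U n α (fun t => t ^ m) x = S / n ^ m := by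
  have hn' : (n : ℝ) ≠ 0 := Nat.cast_ne_zero.mpr hn.ne'
  rw [U_eq_tsum_genSzaszBasis, ← hS.tsum_eq, div_eq_mul_inv, ← tsum_mul_left,
    ← tsum_mul_right]
  refine tsum_congr fun i => ?_
  rw [integral_szaszBasis_mul_pow hn]
  field_simp
  ring

theorem stmt2_general (n : ℕ) (hn : 0 < n) (α : ℝ) (hα : 0 < α) (x : ℝ) :
    U n α (fun _ => 1) x = 1 ∧
    U n α (fun t => t) x = (1 + n * x) / n ∧
    U n α (fun t => t ^ 2) x =
      (2 + 4 * n * x + n ^ 2 * x ^ 2 + n ^ 2 * x * α) / (n : ℝ) ^ 2 := by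
  have M := hasSum_descFactorial_mul_genSzaszBasis hn hα x
  refine ⟨?_, ?_, ?_⟩
  · have h := U_pow_eq_of_hasSum hn α x 0
      ((M 0).congr_fun fun i => by simp [Nat.factorial_ne_zero])
    simpa [risingFac_zero] using h
  · have h := U_pow_eq_of_hasSum hn α x 1 (((M 1).add (M 0)).congr_fun fun i => by
      push_cast [Nat.factorial_succ, Nat.descFactorial_one, Nat.descFactorial_zero]
      field_simp)
    simp only [pow_one] at h
    rw [h, risingFac_one, risingFac_zero]
    ring
  · -- `(i + 1)(i + 2) = i(i - 1) + 4i + 2`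
    have h := U_pow_eq_of_hasSum hn α x 2
      (((M 2).add (((M 1).mul_left 4).add ((M 0).mul_left 2))).congr_fun fun i => by
        push_cast [Nat.factorial_succ, Nat.descFactorial_one, Nat.descFactorial_zero,
          Nat.cast_descFactorial_two]
        field_simp
        ring)
    rw [h, risingFac_two, risingFac_one, risingFac_zero]
    ring

theorem stmt2 (n : ℕ) (hn : 0 < n) (α : ℝ) (hα : 0 < α) (hαn : α ≤ 1 / n)
    (x : ℝ) (hx : 0 ≤ x) :
    U n α (fun _ => 1) x = 1 ∧
    U n α (fun t => t) x = (1 + n * x) / n ∧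
    U n α (fun t => t ^ 2) x =
      (2 + 4 * n * x + n ^ 2 * x ^ 2 + n ^ 2 * x * α) / (n : ℝ) ^ 2 :=
  stmt2_general n hn α hα x
end

section
/- For n ∈ ℕ⁺ and 0 < α ≤ 1/n, let K_n^[α](x,t) = n·Σ_{i=0}^∞ (1+nα)^(−x/α)·(α+1/n)^(−i)·x^(i,−α)/i! · e^(−nt)(nt)^i/i! denote the kernel of the operator U_n^[α], so that U_n^[α](f; x) = ∫_0^∞ K_n^[α](x,t) f(t) dt. Then for every x ≥ 0: (1) for every y with 0 ≤ y < x, ∫_0^y K_n^[α](x,t) dt ≤ 3(x + 1/n)/(n(x − y)²); and (2) for every z with x < z, ∫_z^∞ K_n^[α](x,t) dt ≤ 3(x + 1/n)/(n(z − x)²). -/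
open MeasureTheory Filter

/-- The kernel of the operator `U_n^[α]`. -/
noncomputable def Ukernel (n : ℕ) (α : ℝ) (x t : ℝ) : ℝ :=
  (n : ℝ) * ∑' i : ℕ,
    (1 + (n : ℝ) * α) ^ (-x / α) * (α + 1 / (n : ℝ)) ^ (-(i : ℤ)) *
      (risingFac x α i / (Nat.factorial i : ℝ)) * szaszBasis n i t

/-!
The kernel is `n ∑ᵢ wᵢ sᵢ(t)`, where `sᵢ` is the Szász basis and the weights `wᵢ` form the negative
binomial distribution with parameters `a = x / α` and `q = nα / (1 + nα)`. The identity
`(i + 1) cₐ(i + 1) = a cₐ₊₁(i)` for its coefficients shifts the binomial series of `(1 - q)^(-a)` into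
`∑ wᵢ = 1`, `∑ i wᵢ = n x` and `∑ i (i - 1) wᵢ = n² x (x + α)`. Since `t sᵢ(t) = (i + 1)/n · sᵢ₊₁(t)`
and `∫ sᵢ = 1/n`, the second central moment is `Θ₂ = α x + 2x/n + 2/n² ≤ 3 (x + 1/n)/n` when
`α ≤ 1/n`. Both bounds are then Chebyshev's inequality: on a set where `(t - x)² ≥ D`, `D ∫ K ≤ Θ₂`.
-/

open Set Real

open Finset in
lemma risingFac_succ_left (x α : ℝ) (i : ℕ) :
    risingFac x α (i + 1) = x * risingFac (x + α) α i := by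
  simp only [risingFac, prod_range_succ', Nat.cast_add, Nat.cast_one, Nat.cast_zero, zero_mul,
    add_zero]
  rw [mul_comm]
  congr 1
  exact prod_congr rfl fun j _ => by ring

open Finset in
lemma risingFac_mul_mul (c x α : ℝ) (i : ℕ) :
    risingFac (c * x) (c * α) i = c ^ i * risingFac x α i := by
  calc ∏ j ∈ range i, (c * x + j * (c * α)) = ∏ j ∈ range i, (c * (x + j * α)) :=
        prod_congr rfl fun j _ => by ring
    _ = c ^ i * risingFac x α i := by rw [prod_mul_distrib, prod_const, card_range, risingFac]

noncomputable def negBinomCoeff (a : ℝ) (i : ℕ) : ℝ :=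
  risingFac a 1 i / i.factorial

open Finset in
lemma negBinomCoeff_eq_choose (a : ℝ) (i : ℕ) : negBinomCoeff a i = Ring.choose (a + i - 1) i := by
  rw [negBinomCoeff, ← Ring.multichoose_eq, div_eq_iff (by positivity), mul_comm, ← nsmul_eq_mul,
    Ring.factorial_nsmul_multichoose_eq_ascPochhammer, Polynomial.ascPochhammer_smeval_eq_eval]
  induction i with
  | zero => simp [risingFac]
  | succ k ih => rw [risingFac, prod_range_succ, ascPochhammer_succ_eval, ← ih, risingFac]; simp

lemma succ_mul_negBinomCoeff_succ (a : ℝ) (i : ℕ) :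
    (i + 1) * negBinomCoeff a (i + 1) = a * negBinomCoeff (a + 1) i := by
  rw [negBinomCoeff, negBinomCoeff, risingFac_succ_left, Nat.factorial_succ]
  push_cast
  field_simp

section NegBinomSeries

variable {a q s : ℝ}

lemma hasSum_negBinomCoeff_mul_pow (hq : |q| < 1) :
    HasSum (fun i => negBinomCoeff a i * q ^ i) ((1 - q) ^ (-a)) := by
  have h := (Real.one_div_one_sub_rpow_hasFPowerSeriesOnBall_zero a).hasSum (y := q)
    (by simpa [enorm_eq_nnnorm, ← NNReal.coe_lt_one] using hq)
  rw [Real.rpow_neg (by linarith [le_abs_self q])]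
  simpa [FormalMultilinearSeries.ofScalars_apply_eq, negBinomCoeff_eq_choose, mul_comm] using h

lemma HasSum.natCast_mul_negBinomCoeff_mul_pow {f : ℝ → ℝ}
    (h : HasSum (fun i : ℕ => f (i + 1) * (negBinomCoeff (a + 1) i * q ^ i)) s) :
    HasSum (fun i : ℕ => i * f i * (negBinomCoeff a i * q ^ i)) (a * q * s) := by
  refine (hasSum_nat_add_iff' 1).mp ?_
  simp only [Finset.sum_range_one, Nat.cast_zero, zero_mul, sub_zero]
  refine (h.mul_left (a * q)).congr_fun fun i => ?_
  push_cast
  linear_combination (f (i + 1) * q ^ i * q) * succ_mul_negBinomCoeff_succ a i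

lemma hasSum_natCast_mul_negBinomCoeff_mul_pow (hq : |q| < 1) :
    HasSum (fun i : ℕ => i * (negBinomCoeff a i * q ^ i)) (a * q * (1 - q) ^ (-(a + 1))) := by
  simpa using HasSum.natCast_mul_negBinomCoeff_mul_pow (f := fun _ => 1)
    (by simpa using hasSum_negBinomCoeff_mul_pow (a := a + 1) hq)

lemma hasSum_descFactorial_mul_negBinomCoeff_mul_pow (hq : |q| < 1) :
    HasSum (fun i : ℕ => i * (i - 1) * (negBinomCoeff a i * q ^ i))
      (a * (a + 1) * q ^ 2 * (1 - q) ^ (-(a + 2))) := by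
  have h := HasSum.natCast_mul_negBinomCoeff_mul_pow (f := fun y => y - 1)
    (by simpa using hasSum_natCast_mul_negBinomCoeff_mul_pow (a := a + 1) hq)
  convert h using 1
  ring_nf

end NegBinomSeries

lemma rpow_neg_mul_inv_rpow_neg {p : ℝ} (hp : 0 < p) (a b : ℝ) :
    p ^ (-a) * p⁻¹ ^ (-b) = p ^ (b - a) := by
  rw [inv_rpow hp.le, rpow_neg hp.le b, inv_inv, ← rpow_add hp]
  ring_nf

noncomputable def durrmeyerWeight (n : ℕ) (α x : ℝ) (i : ℕ) : ℝ :=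
  (1 + (n : ℝ) * α) ^ (-x / α) * (α + 1 / (n : ℝ)) ^ (-(i : ℤ)) *
    (risingFac x α i / (Nat.factorial i : ℝ))

lemma Ukernel_eq_tsum (n : ℕ) (α x t : ℝ) :
    Ukernel n α x t = n * ∑' i, durrmeyerWeight n α x i * szaszBasis n i t := rfl

lemma U_eq_tsum (n : ℕ) (α : ℝ) (f : ℝ → ℝ) (x : ℝ) :
    U n α f x = n * ∑' i, durrmeyerWeight n α x i * ∫ u in Ioi 0, szaszBasis n i u * f u :=
  rfl

lemma durrmeyerWeight_nonneg (n : ℕ) {α x : ℝ} (hα : 0 < α) (hx : 0 ≤ x) (i : ℕ) :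
    0 ≤ durrmeyerWeight n α x i := by
  have : 0 ≤ risingFac x α i := Finset.prod_nonneg fun _ _ => by positivity
  unfold durrmeyerWeight
  positivity

section DurrmeyerWeight

variable {n : ℕ} {α : ℝ} (hn : 0 < n) (hα : 0 < α) (x : ℝ)
include hn hα

lemma durrmeyerWeight_eq (i : ℕ) :
    durrmeyerWeight n α x i =
      (1 + n * α) ^ (-(x / α)) * (negBinomCoeff (x / α) i * (1 - (1 + n * α)⁻¹) ^ i) := by
  have hn' : (0 : ℝ) < n := Nat.cast_pos.2 hn
  have hrf : risingFac x α i = α ^ i * risingFac (x / α) 1 i := by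
    rw [← risingFac_mul_mul, mul_div_cancel₀ _ hα.ne', mul_one]
  have hq : α / (α + 1 / n) = 1 - (1 + n * α)⁻¹ := by field_simp; ring
  rw [durrmeyerWeight, negBinomCoeff, hrf, ← hq, zpow_neg, zpow_natCast, div_pow, neg_div]
  ring

lemma abs_one_sub_inv_lt_one : |1 - (1 + n * α)⁻¹| < 1 := by
  have hp : 1 < 1 + n * α := lt_add_of_pos_right 1 (by positivity)
  rw [abs_lt]
  constructor <;> linarith [inv_pos.2 (zero_lt_one.trans hp), inv_lt_one_of_one_lt₀ hp]

lemma hasSum_durrmeyerWeight : HasSum (durrmeyerWeight n α x) 1 := by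
  have h := (hasSum_negBinomCoeff_mul_pow (a := x / α) (abs_one_sub_inv_lt_one hn hα)).mul_left
    ((1 + n * α) ^ (-(x / α)))
  rw [sub_sub_cancel, rpow_neg_mul_inv_rpow_neg (by positivity), sub_self, rpow_zero] at h
  exact h.congr_fun (durrmeyerWeight_eq hn hα x)

lemma hasSum_natCast_mul_durrmeyerWeight :
    HasSum (fun i : ℕ => i * durrmeyerWeight n α x i) (n * x) := by
  have h := (hasSum_natCast_mul_negBinomCoeff_mul_pow (a := x / α)
    (abs_one_sub_inv_lt_one hn hα)).mul_left ((1 + n * α) ^ (-(x / α)))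
  rw [sub_sub_cancel, mul_left_comm, rpow_neg_mul_inv_rpow_neg (by positivity),
    add_sub_cancel_left, rpow_one,
    show x / α * (1 - (1 + n * α)⁻¹) * (1 + n * α) = n * x by field_simp; ring] at h
  exact h.congr_fun fun i => by rw [durrmeyerWeight_eq hn hα x]; ring

lemma hasSum_descFactorial_mul_durrmeyerWeight :
    HasSum (fun i : ℕ => i * (i - 1) * durrmeyerWeight n α x i) (n ^ 2 * x * (x + α)) := by
  have h := (hasSum_descFactorial_mul_negBinomCoeff_mul_pow (a := x / α)
    (abs_one_sub_inv_lt_one hn hα)).mul_left ((1 + n * α) ^ (-(x / α)))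
  rw [sub_sub_cancel, mul_left_comm, rpow_neg_mul_inv_rpow_neg (by positivity),
    add_sub_cancel_left, rpow_two, show x / α * (x / α + 1) * (1 - (1 + n * α)⁻¹) ^ 2 *
      (1 + n * α) ^ 2 = n ^ 2 * x * (x + α) by field_simp; ring] at h
  exact h.congr_fun fun i => by rw [durrmeyerWeight_eq hn hα x]; ring

end DurrmeyerWeight

lemma szaszBasis_eq_rpow (n i : ℕ) (t : ℝ) :
    szaszBasis n i t = n ^ i / i.factorial * (t ^ ((i + 1 : ℝ) - 1) * exp (-(n * t))) := by
  rw [szaszBasis, add_sub_cancel_right, rpow_natCast, mul_pow, neg_mul]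
  ring

lemma integral_szaszBasis {n : ℕ} (hn : 0 < n) (i : ℕ) :
    ∫ t in Ioi (0 : ℝ), szaszBasis n i t = 1 / n := by
  have hn' : (0 : ℝ) < n := Nat.cast_pos.2 hn
  simp_rw [szaszBasis_eq_rpow n i]
  rw [integral_const_mul, integral_rpow_mul_exp_neg_mul_Ioi (by positivity) hn',
    Gamma_nat_eq_factorial, ← Nat.cast_add_one, rpow_natCast, one_div_pow, pow_succ]
  field_simp

lemma integrableOn_szaszBasis {n : ℕ} (hn : 0 < n) (i : ℕ) :
    IntegrableOn (szaszBasis n i) (Ioi 0) :=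
  .of_integral_ne_zero (by rw [integral_szaszBasis hn]; positivity)

lemma mul_szaszBasis {n : ℕ} (hn : n ≠ 0) (i : ℕ) (t : ℝ) :
    t * szaszBasis n i t = (i + 1) / n * szaszBasis n (i + 1) t := by
  rw [szaszBasis, szaszBasis, Nat.factorial_succ, pow_succ]
  push_cast
  field_simp

lemma szaszBasis_nonneg (n i : ℕ) {t : ℝ} (ht : 0 ≤ t) : 0 ≤ szaszBasis n i t := by
  unfold szaszBasis
  positivity

lemma szaszBasis_mul_sub_sq {n : ℕ} (hn : n ≠ 0) (i : ℕ) (x t : ℝ) :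
    szaszBasis n i t * (t - x) ^ 2 =
      (i + 1) * (i + 2) / n ^ 2 * szaszBasis n (i + 2) t
        - 2 * x * (i + 1) / n * szaszBasis n (i + 1) t + x ^ 2 * szaszBasis n i t := by
  have h₁ := mul_szaszBasis hn i t
  have h₂ := mul_szaszBasis hn (i + 1) t
  push_cast at h₂
  calc szaszBasis n i t * (t - x) ^ 2
      = t * (t * szaszBasis n i t) - 2 * x * (t * szaszBasis n i t)
          + x ^ 2 * szaszBasis n i t := by ring
    _ = _ := by rw [h₁, mul_left_comm, h₂]; field_simp; ring

lemma integrableOn_szaszBasis_mul_sub_sq {n : ℕ} (hn : 0 < n) (i : ℕ) (x : ℝ) :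
    IntegrableOn (fun t => szaszBasis n i t * (t - x) ^ 2) (Ioi 0) := by
  simp_rw [szaszBasis_mul_sub_sq hn.ne']
  exact (((integrableOn_szaszBasis hn _).const_mul _).sub
    ((integrableOn_szaszBasis hn _).const_mul _)).add ((integrableOn_szaszBasis hn _).const_mul _)

lemma integral_szaszBasis_mul_sub_sq {n : ℕ} (hn : 0 < n) (i : ℕ) (x : ℝ) :
    ∫ t in Ioi (0 : ℝ), szaszBasis n i t * (t - x) ^ 2 =
      ((i + 1) * (i + 2) / n ^ 2 - 2 * x * (i + 1) / n + x ^ 2) / n := by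
  have hint (j : ℕ) (c : ℝ) : IntegrableOn (fun t => c * szaszBasis n j t) (Ioi 0) :=
    (integrableOn_szaszBasis hn j).const_mul c
  simp_rw [szaszBasis_mul_sub_sq hn.ne']
  rw [integral_add ((hint _ _).sub' (hint _ _)) (hint _ _), integral_sub (hint _ _) (hint _ _)]
  simp only [integral_const_mul, integral_szaszBasis hn]
  ring

section SecondMoment

variable {n : ℕ} {α : ℝ} (hn : 0 < n) (hα : 0 < α) (x : ℝ)
include hn hα

lemma hasSum_durrmeyerWeight_mul_integral_sub_sq :
    HasSum (fun i => durrmeyerWeight n α x i * ∫ t in Ioi (0 : ℝ), szaszBasis n i t * (t - x) ^ 2)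
      ((α * x + 2 * x / n + 2 / n ^ 2) / n) := by
  have hn' : (n : ℝ) ≠ 0 := (Nat.cast_pos.2 hn).ne'
  have h := (((hasSum_descFactorial_mul_durrmeyerWeight hn hα x).mul_right (1 / (n : ℝ) ^ 3)).add
    ((hasSum_natCast_mul_durrmeyerWeight hn hα x).mul_right (4 / n ^ 3 - 2 * x / n ^ 2))).add
    ((hasSum_durrmeyerWeight hn hα x).mul_right (2 / n ^ 3 - 2 * x / n ^ 2 + x ^ 2 / n))
  rw [show n ^ 2 * x * (x + α) * (1 / (n : ℝ) ^ 3) + n * x * (4 / n ^ 3 - 2 * x / n ^ 2) +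
      1 * (2 / n ^ 3 - 2 * x / n ^ 2 + x ^ 2 / n) = (α * x + 2 * x / n + 2 / n ^ 2) / n by
    field_simp; ring] at h
  exact h.congr_fun fun i => by rw [integral_szaszBasis_mul_sub_sq hn]; field_simp; ring

lemma theta_two_eq : theta n α 2 x = α * x + 2 * x / n + 2 / n ^ 2 := by
  have hn' : (n : ℝ) ≠ 0 := (Nat.cast_pos.2 hn).ne'
  rw [theta, U_eq_tsum, (hasSum_durrmeyerWeight_mul_integral_sub_sq hn hα x).tsum_eq]
  field_simp

end SecondMoment

section Tail

variable {n : ℕ} {x D : ℝ} {S : Set ℝ} (hn : 0 < n) (hS : MeasurableSet S) (hS0 : S ⊆ Ioi 0)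
include hn hS hS0

lemma mul_setIntegral_szaszBasis_le (hD : ∀ t ∈ S, D ≤ (t - x) ^ 2) (i : ℕ) :
    D * ∫ t in S, szaszBasis n i t ≤ ∫ t in Ioi 0, szaszBasis n i t * (t - x) ^ 2 := by
  have hint := integrableOn_szaszBasis_mul_sub_sq hn i x
  calc D * ∫ t in S, szaszBasis n i t = ∫ t in S, D * szaszBasis n i t :=
        (integral_const_mul D _).symm
    _ ≤ ∫ t in S, szaszBasis n i t * (t - x) ^ 2 := by
        refine setIntegral_mono_on (((integrableOn_szaszBasis hn i).mono_set hS0).const_mul D)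
          (hint.mono_set hS0) hS fun t ht => ?_
        rw [mul_comm]
        exact mul_le_mul_of_nonneg_left (hD t ht) (szaszBasis_nonneg n i (hS0 ht).le)
    _ ≤ ∫ t in Ioi 0, szaszBasis n i t * (t - x) ^ 2 :=
        setIntegral_mono_set hint
          (ae_restrict_of_forall_mem measurableSet_Ioi fun t ht =>
            mul_nonneg (szaszBasis_nonneg n i (le_of_lt ht)) (sq_nonneg _))
          hS0.eventuallyLE

variable {α : ℝ} (hα : 0 < α) (hx : 0 ≤ x)
include hα hx

lemma hasSum_setIntegral_Ukernel :
    HasSum (fun i => n * (durrmeyerWeight n α x i * ∫ t in S, szaszBasis n i t))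
      (∫ t in S, Ukernel n α x t) := by
  have hw := durrmeyerWeight_nonneg n hα hx
  have hint (i : ℕ) : IntegrableOn (fun t => n * (durrmeyerWeight n α x i * szaszBasis n i t)) S :=
    (((integrableOn_szaszBasis hn i).mono_set hS0).const_mul _).const_mul _
  have hnorm (i : ℕ) : ∫ t in S, ‖n * (durrmeyerWeight n α x i * szaszBasis n i t)‖ =
      n * (durrmeyerWeight n α x i * ∫ t in S, szaszBasis n i t) := by
    rw [setIntegral_congr_fun hS fun t ht => Real.norm_of_nonneg (by
      have := szaszBasis_nonneg n i (hS0 ht).le; have := hw i; positivity)]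
    rw [integral_const_mul, integral_const_mul]
  have hsum : Summable fun i => n * (durrmeyerWeight n α x i * ∫ t in S, szaszBasis n i t) := by
    refine .of_nonneg_of_le (fun i => ?_) (fun i => ?_)
      (((hasSum_durrmeyerWeight hn hα x).summable.mul_right (1 / (n : ℝ))).mul_left (n : ℝ))
    · have := setIntegral_nonneg (μ := volume) hS fun t ht => szaszBasis_nonneg n i (hS0 ht).le
      have := hw i
      positivity
    · gcongr
      · exact hw i
      rw [← integral_szaszBasis hn i]
      exact setIntegral_mono_set (integrableOn_szaszBasis hn i)
        (ae_restrict_of_forall_mem measurableSet_Ioi fun t ht => szaszBasis_nonneg n i (le_of_lt ht))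
        hS0.eventuallyLE
  have h := hasSum_integral_of_summable_integral_norm hint (by simpa only [hnorm] using hsum)
  simp only [integral_const_mul] at h
  simpa only [Ukernel_eq_tsum, tsum_mul_left] using h

lemma mul_setIntegral_Ukernel_le_theta (hD : ∀ t ∈ S, D ≤ (t - x) ^ 2) :
    D * ∫ t in S, Ukernel n α x t ≤ theta n α 2 x := by
  have hθ : HasSum (fun i => n * (durrmeyerWeight n α x i *
      ∫ t in Ioi (0 : ℝ), szaszBasis n i t * (t - x) ^ 2)) (theta n α 2 x) := by
    rw [theta, U_eq_tsum]
    exact (hasSum_durrmeyerWeight_mul_integral_sub_sq hn hα x).summable.hasSum.mul_left _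
  refine hasSum_le (fun i => ?_) ((hasSum_setIntegral_Ukernel hn hS hS0 hα hx).mul_left D) hθ
  rw [mul_left_comm, mul_left_comm D]
  gcongr
  · exact durrmeyerWeight_nonneg n hα hx i
  exact mul_setIntegral_szaszBasis_le hn hS hS0 hD i

end Tail

lemma theta_two_le {n : ℕ} (hn : 0 < n) {α : ℝ} (hα : 0 < α) (hαn : α ≤ 1 / n) {x : ℝ}
    (hx : 0 ≤ x) : theta n α 2 x ≤ 3 * (x + 1 / n) / n := by
  have hn' : (0 : ℝ) < n := Nat.cast_pos.2 hn
  have hαx : α * x ≤ x / n := by simpa [div_eq_inv_mul] using mul_le_mul_of_nonneg_right hαn hx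
  rw [theta_two_eq hn hα, le_div_iff₀ hn']
  calc (α * x + 2 * x / n + 2 / n ^ 2) * n ≤ (x / n + 2 * x / n + 3 / n ^ 2) * n := by
        gcongr; norm_num
    _ = 3 * (x + 1 / n) := by field_simp; ring

lemma setIntegral_Ukernel_le {n : ℕ} (hn : 0 < n) {α : ℝ} (hα : 0 < α) (hαn : α ≤ 1 / n)
    {x : ℝ} (hx : 0 ≤ x) {S : Set ℝ} (hS : MeasurableSet S) (hS0 : S ⊆ Ioi 0) {D : ℝ}
    (hD : 0 < D) (hSD : ∀ t ∈ S, D ≤ (t - x) ^ 2) :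
    ∫ t in S, Ukernel n α x t ≤ 3 * (x + 1 / n) / (n * D) := by
  rw [← div_div, le_div_iff₀' hD]
  exact (mul_setIntegral_Ukernel_le_theta hn hS hS0 hα hx hSD).trans (theta_two_le hn hα hαn hx)

theorem stmt19 (n : ℕ) (hn : 0 < n) (α : ℝ) (hα : 0 < α) (hαn : α ≤ 1 / n)
    (x : ℝ) (hx : 0 ≤ x) :
    (∀ y : ℝ, 0 ≤ y → y < x →
      (∫ t in Set.Ioc (0 : ℝ) y, Ukernel n α x t) ≤
        3 * (x + 1 / n) / (n * (x - y) ^ 2)) ∧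
    (∀ z : ℝ, x < z →
      (∫ t in Set.Ioi z, Ukernel n α x t) ≤
        3 * (x + 1 / n) / (n * (z - x) ^ 2)) := by
  refine ⟨fun y _ hyx => ?_, fun z hxz => ?_⟩
  · refine setIntegral_Ukernel_le hn hα hαn hx measurableSet_Ioc Ioc_subset_Ioi_self
      (pow_pos (sub_pos.2 hyx) 2) fun t ht => ?_
    nlinarith [ht.2]
  · refine setIntegral_Ukernel_le hn hα hαn hx measurableSet_Ioi
      (Ioi_subset_Ioi (hx.trans hxz.le)) (pow_pos (sub_pos.2 hxz) 2) fun t ht => ?_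
    nlinarith [mem_Ioi.1 ht]
end
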